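/- Every terminating CFTR program runs in native time polynomial in the input length: if p is a CFTR program that terminates on all inputs, then there is a polynomial π with time_p(x) ≤ π(|x|) for all x ∈ {0,1}*. -/

import Mathlib

/-! # Cons-free programs (CF / CFTR / CFpoly / NCF) and Turing-machine complexity classes -/

/-- Values: booleans and bit strings. -/
inductive Val : Type
  | bool : Bool → Val
  | str  : List Bool → Val
deriving DecidableEq, Inhabited

/-- Base operations of cons-free programs. -/
inductive BOp : Type
  | not | null | head | tail
deriving DecidableEq, Inhabited

/-- Expressions.  `amb` is the nondeterministic choice construct of NCF;
CF programs are exactly the choice-free programs. -/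
inductive Exp : Type
  | tt   : Exp
  | ff   : Exp
  | nil  : Exp
  | var  : Nat → Exp
  | base : BOp → Exp → Exp
  | ite  : Exp → Exp → Exp → Exp
  | call : Nat → List Exp → Exp
  | amb  : Exp → Exp → Exp
deriving Inhabited

/-- A function definition `f x1 ... xm = e`: arity `m` and body `e`
(variables are de Bruijn-style indices into the argument list). -/
structure Defn where
  arity : Nat
  body  : Exp
deriving Inhabited

/-- A program is a finite list of function definitions; the first one is the entry point. -/
abbrev Prog := List Defn

/-- Body of the entry (first) function. -/
def Prog.entry (p : Prog) : Exp := p.headI.body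

/-- Semantics of the base functions (partial). -/
def evalBase : BOp → Val → Option Val
  | .not,  .bool b       => some (.bool (!b))
  | .null, .str s        => some (.bool s.isEmpty)
  | .head, .str (b :: _) => some (.bool b)
  | .tail, .str (_ :: s) => some (.str s)
  | _,     _             => none

/- Call-by-value big-step semantics.  `EvalH p ρ e v n h` means: in environment `ρ`
the expression `e` evaluates to `v`, by a computation (proof) tree with `n` nodes
whose call history (the sequence of configurations `(f, arguments)` of calls to
program-defined functions, in evaluation order) is `h`. -/
mutual
inductive EvalH (p : Prog) : List Val → Exp → Val → Nat → List (Nat × List Val) → Prop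
  | tt  {ρ} : EvalH p ρ .tt (.bool true) 1 []
  | ff  {ρ} : EvalH p ρ .ff (.bool false) 1 []
  | nil {ρ} : EvalH p ρ .nil (.str []) 1 []
  | var {ρ : List Val} {i : Nat} {v} : ρ[i]? = some v → EvalH p ρ (.var i) v 1 []
  | base {ρ op e v w n h} :
      EvalH p ρ e v n h → evalBase op v = some w →
      EvalH p ρ (.base op e) w (n + 1) h
  | iteT {ρ e0 e1 e2 v n0 n1 h0 h1} :
      EvalH p ρ e0 (.bool true) n0 h0 → EvalH p ρ e1 v n1 h1 →
      EvalH p ρ (.ite e0 e1 e2) v (n0 + n1 + 1) (h0 ++ h1)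
  | iteF {ρ e0 e1 e2 v n0 n2 h0 h2} :
      EvalH p ρ e0 (.bool false) n0 h0 → EvalH p ρ e2 v n2 h2 →
      EvalH p ρ (.ite e0 e1 e2) v (n0 + n2 + 1) (h0 ++ h2)
  | ambL {ρ e1 e2 v n h} :
      EvalH p ρ e1 v n h → EvalH p ρ (.amb e1 e2) v (n + 1) h
  | ambR {ρ e1 e2 v n h} :
      EvalH p ρ e2 v n h → EvalH p ρ (.amb e1 e2) v (n + 1) h
  | call {ρ : List Val} {f : Nat} {es ws d v m n hs h} :
      p[f]? = some d → EvalArgsH p ρ es ws m hs → ws.length = d.arity →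
      EvalH p ws d.body v n h →
      EvalH p ρ (.call f es) v (m + n + 1) (hs ++ (f, ws) :: h)

inductive EvalArgsH (p : Prog) : List Val → List Exp → List Val → Nat → List (Nat × List Val) → Prop
  | nil {ρ} : EvalArgsH p ρ [] [] 0 []
  | cons {ρ e es v vs n m h hs} :
      EvalH p ρ e v n h → EvalArgsH p ρ es vs m hs →
      EvalArgsH p ρ (e :: es) (v :: vs) (n + m) (h ++ hs)
end

/-- `p, ρ ⊢ e → v`. -/
def Eval (p : Prog) (ρ : List Val) (e : Exp) (v : Val) : Prop := ∃ n h, EvalH p ρ e v n h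

/-- Pointwise evaluation of a list of expressions. -/
def EvalList (p : Prog) (ρ : List Val) (es : List Exp) (ws : List Val) : Prop :=
  List.Forall₂ (Eval p ρ) es ws

/-- `⟦p⟧(x) = v` with computation-tree size `n` and call history `h`. -/
def RunH (p : Prog) (x : List Bool) (v : Val) (n : Nat) (h : List (Nat × List Val)) : Prop :=
  EvalH p [Val.str x] p.entry v n h

/-- `⟦p⟧(x) = v`. -/
def Run (p : Prog) (x : List Bool) (v : Val) : Prop := ∃ n h, RunH p x v n h

/-- `time_p(x) = n`: the computation tree `T^{p,x}` has `n` nodes. -/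
def TimeIs (p : Prog) (x : List Bool) (n : Nat) : Prop := ∃ v h, RunH p x v n h

/-- Deterministic decision: `p` terminates on every input, answering `True` exactly on `X`. -/
def Decides (p : Prog) (X : Set (List Bool)) : Prop :=
  ∀ x : List Bool, (x ∈ X ∧ Run p x (.bool true)) ∨ (x ∉ X ∧ Run p x (.bool false))

/-- Nondeterministic decision: `x ∈ X` iff some computation `⟦p⟧(x) ⇝ True` exists. -/
def NDecides (p : Prog) (X : Set (List Bool)) : Prop :=
  ∀ x : List Bool, x ∈ X ↔ Run p x (.bool true)

/-- `Reach_p(x)`: configurations `(f, ρ)` called at least once in some computation of `p` on `x`. -/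
def Reach (p : Prog) (x : List Bool) : Set (Nat × List Val) :=
  {c | ∃ v n h, RunH p x v n h ∧ c ∈ h}

/-- `V_x = {0,1} ∪ suffixes(x)`: the range of variation on input `x`. -/
def Vx (x : List Bool) : Set Val :=
  {v | (∃ b, v = .bool b) ∨ ∃ s, v = .str s ∧ s <:+ x}

/-- An expression is choice-free (belongs to the CF fragment). -/
inductive NoChoice : Exp → Prop
  | tt : NoChoice .tt
  | ff : NoChoice .ff
  | nil : NoChoice .nil
  | var (i) : NoChoice (.var i)
  | base (op) {e} : NoChoice e → NoChoice (.base op e)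
  | ite {a b c} : NoChoice a → NoChoice b → NoChoice c → NoChoice (.ite a b c)
  | call (f) {es} : (∀ e ∈ es, NoChoice e) → NoChoice (.call f es)

/-- A CF program: a cons-free program with no nondeterministic choice. -/
def CFProg (p : Prog) : Prop := ∀ d ∈ p, NoChoice d.body

/-- Does the expression contain a call to a program-defined function? -/
def hasCall : Exp → Bool
  | .base _ e => hasCall e
  | .ite a b c => hasCall a || hasCall b || hasCall c
  | .call _ _ => true
  | .amb a b => hasCall a || hasCall b
  | _ => false

/-- The classification map `α` with `X = 0 < T = 1 < N = 2`:
`α e = 0` if `e` has no calls; `α e = 1` if all calls in `e` are in tail position;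
`α e = 2` otherwise. -/
def alpha : Exp → Nat
  | .base _ e => if hasCall e then 2 else 0
  | .ite a b c => if hasCall a then 2 else max (alpha b) (alpha c)
  | .call _ es => if es.all (fun e => !hasCall e) then 1 else 2
  | .amb a b => max (alpha a) (alpha b)
  | _ => 0

/-- All calls in every definition body are in tail position (`α(e^f) ∈ {X, T}`). -/
def TRProg (p : Prog) : Prop := ∀ d ∈ p, alpha d.body ≤ 1

/-- A CFTR program: a tail-recursive cons-free program. -/
def CFTRProg (p : Prog) : Prop := CFProg p ∧ TRProg p

/-- Every call in the program is a tail call or a linear call, i.e. no call to a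
defined function is nested inside the argument of another call. -/
def linearOnly : Exp → Bool
  | .base _ e => linearOnly e
  | .ite a b c => linearOnly a && linearOnly b && linearOnly c
  | .call _ es => es.all (fun e => !hasCall e)
  | .amb a b => linearOnly a && linearOnly b
  | _ => true

/-- A CFpoly program: a CF program that terminates on all inputs, in polynomial native time. -/
def CFpolyProg (p : Prog) : Prop :=
  CFProg p ∧ (∀ x, ∃ v, Run p x v) ∧
    ∃ π : Polynomial ℕ, ∀ x n, TimeIs p x n → n ≤ π.eval x.length

/-- A judgment `p, ρ ⊢ e → v` occurs in the computation tree `T^{p,x}`. -/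
inductive Occurs (p : Prog) (x : List Bool) : List Val → Exp → Val → Prop
  | root {v} : Eval p [Val.str x] p.entry v → Occurs p x [Val.str x] p.entry v
  | base {ρ op e v w} : Occurs p x ρ (.base op e) v → Eval p ρ e w → Occurs p x ρ e w
  | iteTest {ρ a b c v w} : Occurs p x ρ (.ite a b c) v → Eval p ρ a w → Occurs p x ρ a w
  | iteT {ρ a b c v} : Occurs p x ρ (.ite a b c) v → Eval p ρ a (.bool true) →
      Eval p ρ b v → Occurs p x ρ b v
  | iteF {ρ a b c v} : Occurs p x ρ (.ite a b c) v → Eval p ρ a (.bool false) →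
      Eval p ρ c v → Occurs p x ρ c v
  | ambL {ρ a b v} : Occurs p x ρ (.amb a b) v → Eval p ρ a v → Occurs p x ρ a v
  | ambR {ρ a b v} : Occurs p x ρ (.amb a b) v → Eval p ρ b v → Occurs p x ρ b v
  | arg {ρ f es v e w} : Occurs p x ρ (.call f es) v → e ∈ es → Eval p ρ e w → Occurs p x ρ e w
  | body {ρ f es ws d v} : Occurs p x ρ (.call f es) v → p[f]? = some d →
      EvalList p ρ es ws → Eval p ws d.body v → Occurs p x ws d.body v

/- The deterministic left-to-right bottom-up evaluator, with fuel bounding call depth. -/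
mutual
def evalFuel (p : Prog) : Nat → List Val → Exp → Option Val
  | _, _, .tt => some (.bool true)
  | _, _, .ff => some (.bool false)
  | _, _, .nil => some (.str [])
  | _, ρ, .var i => ρ[i]?
  | k, ρ, .base op e => (evalFuel p k ρ e).bind (evalBase op)
  | k, ρ, .ite a b c =>
      match evalFuel p k ρ a with
      | some (.bool true) => evalFuel p k ρ b
      | some (.bool false) => evalFuel p k ρ c
      | _ => none
  | _, _, .amb _ _ => none
  | k, ρ, .call f es =>
      match evalArgsFuel p k ρ es with
      | some ws =>
          match k, p[f]? with
          | k' + 1, some d => if ws.length = d.arity then evalFuel p k' ws d.body else none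
          | _, _ => none
      | none => none
termination_by k _ e => (k, sizeOf e)
decreasing_by
  all_goals first
    | decreasing_tactic
    | exact Prod.Lex.left _ _ (Nat.lt_succ_self _)
    | (simp_wf; exact Prod.Lex.left _ _ (Nat.lt_succ_self _))

def evalArgsFuel (p : Prog) : Nat → List Val → List Exp → Option (List Val)
  | _, _, [] => some []
  | k, ρ, e :: es =>
      match evalFuel p k ρ e, evalArgsFuel p k ρ es with
      | some v, some vs => some (v :: vs)
      | _, _ => none
termination_by k _ es => (k, sizeOf es)
end

/-! ## Turing machines -/

/-- Head moves. -/
inductive Dir : Type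
  | L | S | R
deriving DecidableEq, Inhabited

def Dir.z : Dir → ℤ
  | .L => -1
  | .S => 0
  | .R => 1

/-- A configuration: control state, input-head position, work-head position, work tape. -/
structure Cfg (Q : Type) where
  q : Q
  ipos : ℤ
  wpos : ℤ
  tape : ℤ → Option Bool

/-- The symbol of the read-only input tape at position `i` (blank outside the input). -/
def inputSym (x : List Bool) (i : ℤ) : Option Bool :=
  if 0 ≤ i then x[i.toNat]? else none

/-- A deterministic Turing machine with a read-only input tape and a read-write work tape. -/
structure TM where
  Q : Type
  [fin : Fintype Q]
  [deq : DecidableEq Q]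
  δ : Q → Option Bool → Option Bool → Q × Option Bool × Dir × Dir
  start : Q
  accept : Q
  reject : Q

attribute [instance] TM.fin TM.deq

def TM.init (M : TM) : Cfg M.Q := ⟨M.start, 0, 0, fun _ => none⟩

/-- One deterministic step (the accepting and rejecting states are halting). -/
def TM.step (M : TM) (x : List Bool) (c : Cfg M.Q) : Cfg M.Q :=
  if c.q = M.accept ∨ c.q = M.reject then c
  else
    let r := M.δ c.q (inputSym x c.ipos) (c.tape c.wpos)
    ⟨r.1, c.ipos + r.2.2.1.z, c.wpos + r.2.2.2.z,
      fun j => if j = c.wpos then r.2.1 else c.tape j⟩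

/-- Configuration after `t` steps on input `x`. -/
def TM.conf (M : TM) (x : List Bool) (t : Nat) : Cfg M.Q := (M.step x)^[t] M.init

/-- `M` decides `X`: reaches `accept` on members, `reject` on non-members. -/
def TM.DecidesTM (M : TM) (X : Set (List Bool)) : Prop :=
  ∀ x : List Bool,
    (x ∈ X → ∃ t, (M.conf x t).q = M.accept) ∧ (x ∉ X → ∃ t, (M.conf x t).q = M.reject)

/-- The work head of `M` stays within `s` cells of the origin on input `x`. -/
def TM.SpaceBound (M : TM) (x : List Bool) (s : Nat) : Prop :=
  ∀ t, ((M.conf x t).wpos).natAbs ≤ s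

/-- `M` halts within `T` steps on input `x`. -/
def TM.HaltsIn (M : TM) (x : List Bool) (T : Nat) : Prop :=
  ∃ t ≤ T, (M.conf x t).q = M.accept ∨ (M.conf x t).q = M.reject

/-- LOGSPACE: decidable by a deterministic TM in `O(log n)` work space. -/
def LOGSPACE : Set (Set (List Bool)) :=
  {X | ∃ M : TM, M.DecidesTM X ∧
        ∃ C : Nat, ∀ x, M.SpaceBound x (C * (Nat.log 2 x.length + 1))}

/-- PTIME: decidable by a deterministic TM in time `O(n^k)` for some `k`. -/
def PTIME : Set (Set (List Bool)) :=
  {X | ∃ M : TM, M.DecidesTM X ∧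
        ∃ C k : Nat, ∀ x, M.HaltsIn x (C * (x.length + 1) ^ k)}

/-- A nondeterministic Turing machine (read-only input tape, read-write work tape). -/
structure NTM where
  Q : Type
  [fin : Fintype Q]
  δ : Q → Option Bool → Option Bool → Finset (Q × Option Bool × Dir × Dir)
  start : Q
  accept : Q

attribute [instance] NTM.fin

def NTM.init (M : NTM) : Cfg M.Q := ⟨M.start, 0, 0, fun _ => none⟩

/-- One nondeterministic step. -/
def NTM.Step (M : NTM) (x : List Bool) (c c' : Cfg M.Q) : Prop :=
  ∃ r ∈ M.δ c.q (inputSym x c.ipos) (c.tape c.wpos),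
    c' = ⟨r.1, c.ipos + r.2.2.1.z, c.wpos + r.2.2.2.z,
          fun j => if j = c.wpos then r.2.1 else c.tape j⟩

/-- A step staying within work space `s`. -/
def NTM.StepB (M : NTM) (x : List Bool) (s : Nat) (c c' : Cfg M.Q) : Prop :=
  M.Step x c c' ∧ c'.wpos.natAbs ≤ s

/-- Some computation path within work space `s` accepts `x`. -/
def NTM.AcceptsInSpace (M : NTM) (x : List Bool) (s : Nat) : Prop :=
  ∃ c : Cfg M.Q, Relation.ReflTransGen (M.StepB x s) M.init c ∧ c.q = M.accept

/-- Nondeterministic space classes `NSPACE(O(f))`. -/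
def NSPACEF (f : Nat → Nat) : Set (Set (List Bool)) :=
  {X | ∃ (M : NTM) (C : Nat), ∀ x, x ∈ X ↔ M.AcceptsInSpace x (C * (f x.length + 1))}

/-- NLOGSPACE = NSPACE(O(log n)). -/
def NLOGSPACE : Set (Set (List Bool)) := NSPACEF (Nat.log 2)

/-! ## Decision classes of the programming languages -/

def decideCFTR : Set (Set (List Bool)) := {X | ∃ p : Prog, CFTRProg p ∧ Decides p X}
def decideCF : Set (Set (List Bool)) := {X | ∃ p : Prog, CFProg p ∧ Decides p X}
def decideCFpoly : Set (Set (List Bool)) := {X | ∃ p : Prog, CFpolyProg p ∧ Decides p X}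
def decideNCF : Set (Set (List Bool)) := {X | ∃ p : Prog, NDecides p X}
def decideNCFTR : Set (Set (List Bool)) := {X | ∃ p : Prog, TRProg p ∧ NDecides p X}

/-! In a tail-recursive program a call is the last step of its caller, so the call history `h`
of a run is a chain: each configuration `(f, ws)` in `h` is followed by the history of evaluating
the body of `f` on `ws`, which returns the final value of the run. By determinism a configuration
cannot occur twice in `h`, since the history after its first occurrence would then equal the
strictly shorter one after its second. The arguments range over `{0,1} ∪ suffixes(x)`, so `h` has
at most `|p| (|x| + 4)^a` entries, and each call adds at most `b` nodes to the computation tree;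
here `sizeOf p` serves as the bound `a` on arities and `b` on sizes of function bodies. -/

theorem alpha_base_le_one {op : BOp} {e : Exp} : alpha (.base op e) ≤ 1 ↔ hasCall e = false := by
  cases h : hasCall e <;> simp [alpha, h]

theorem alpha_ite_le_one {a b c : Exp} :
    alpha (.ite a b c) ≤ 1 ↔ hasCall a = false ∧ alpha b ≤ 1 ∧ alpha c ≤ 1 := by
  cases h : hasCall a <;> simp [alpha, h]

theorem alpha_amb_le_one {a b : Exp} : alpha (.amb a b) ≤ 1 ↔ alpha a ≤ 1 ∧ alpha b ≤ 1 := by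
  simp [alpha]

theorem alpha_call_le_one {f : ℕ} {es : List Exp} :
    alpha (.call f es) ≤ 1 ↔ ∀ e ∈ es, hasCall e = false := by
  simp only [alpha]
  split_ifs with h <;> simp_all

theorem TRProg.alpha_entry_le_one {p : Prog} (hT : TRProg p) : alpha p.entry ≤ 1 := by
  cases p with
  | nil => decide
  | cons d _ => exact hT d List.mem_cons_self

section Evaluation

variable {p : Prog}

theorem EvalH.history_eq_nil_and_le_sizeOf {ρ : List Val} {e : Exp} {v : Val} {n : ℕ}
    {h : List (ℕ × List Val)} (hc : hasCall e = false) :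
    EvalH p ρ e v n h → h = [] ∧ n ≤ sizeOf e
  | .tt | .ff | .nil | .var _ => ⟨rfl, by simp⟩
  | .base he _ => by
    obtain ⟨rfl, hn⟩ := history_eq_nil_and_le_sizeOf (by simpa [hasCall] using hc) he
    exact ⟨rfl, by simp; omega⟩
  | .iteT h0 h1 | .iteF h0 h1 => by
    simp only [hasCall, Bool.or_eq_false_iff] at hc
    obtain ⟨rfl, hn0⟩ := history_eq_nil_and_le_sizeOf hc.1.1 h0
    obtain ⟨rfl, hn1⟩ := history_eq_nil_and_le_sizeOf (by simp [hc]) h1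
    exact ⟨rfl, by simp; omega⟩
  | .ambL h1 | .ambR h1 => by
    simp only [hasCall, Bool.or_eq_false_iff] at hc
    obtain ⟨rfl, hn⟩ := history_eq_nil_and_le_sizeOf (by simp [hc]) h1
    exact ⟨rfl, by simp; omega⟩
  | .call .. => by simp [hasCall] at hc

theorem EvalArgsH.history_eq_nil_and_le_sizeOf {ρ : List Val} {es : List Exp} {ws : List Val}
    {m : ℕ} {hs : List (ℕ × List Val)} (hc : ∀ e ∈ es, hasCall e = false) :
    EvalArgsH p ρ es ws m hs → hs = [] ∧ m ≤ sizeOf es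
  | .nil => ⟨rfl, by simp⟩
  | .cons he hes => by
    obtain ⟨rfl, hn⟩ := he.history_eq_nil_and_le_sizeOf (hc _ List.mem_cons_self)
    obtain ⟨rfl, hm⟩ :=
      history_eq_nil_and_le_sizeOf (fun e he => hc e (List.mem_cons_of_mem _ he)) hes
    exact ⟨rfl, by simp; omega⟩

mutual
theorem EvalH.det (hp : CFProg p) {ρ : List Val} {e : Exp} {v v' : Val} {n n' : ℕ}
    {h h' : List (ℕ × List Val)} (he : NoChoice e) :
    EvalH p ρ e v n h → EvalH p ρ e v' n' h' → v = v' ∧ h = h'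
  | .tt, .tt | .ff, .ff | .nil, .nil => ⟨rfl, rfl⟩
  | .var hi, .var hi' => ⟨Option.some.inj (hi.symm.trans hi'), rfl⟩
  | .base g hb, .base g' hb' => by
    cases he with | base _ he
    obtain ⟨rfl, rfl⟩ := EvalH.det hp he g g'
    exact ⟨Option.some.inj (hb.symm.trans hb'), rfl⟩
  | .iteT g0 g1, .iteT g0' g1' | .iteF g0 g1, .iteF g0' g1' => by
    cases he with | ite ha hb hc
    obtain ⟨-, rfl⟩ := EvalH.det hp ha g0 g0'
    obtain ⟨rfl, rfl⟩ := EvalH.det hp (by assumption) g1 g1'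
    exact ⟨rfl, rfl⟩
  | .iteT g0 _, .iteF g0' _ | .iteF g0 _, .iteT g0' _ => by
    cases he with | ite ha _ _
    simpa using (EvalH.det hp ha g0 g0').1
  | .call hf gargs _ gbody, .call hf' gargs' _ gbody' => by
    cases he with | call _ hes
    obtain ⟨rfl, rfl⟩ := EvalArgsH.det hp hes gargs gargs'
    obtain rfl := Option.some.inj (hf.symm.trans hf')
    obtain ⟨rfl, rfl⟩ := EvalH.det hp (hp _ (List.mem_of_getElem? hf)) gbody gbody'
    exact ⟨rfl, rfl⟩

theorem EvalArgsH.det (hp : CFProg p) {ρ : List Val} {es : List Exp} {ws ws' : List Val}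
    {m m' : ℕ} {hs hs' : List (ℕ × List Val)} (hes : ∀ e ∈ es, NoChoice e) :
    EvalArgsH p ρ es ws m hs → EvalArgsH p ρ es ws' m' hs' → ws = ws' ∧ hs = hs'
  | .nil, .nil => ⟨rfl, rfl⟩
  | .cons g gs, .cons g' gs' => by
    obtain ⟨rfl, rfl⟩ := EvalH.det hp (hes _ List.mem_cons_self) g g'
    obtain ⟨rfl, rfl⟩ := EvalArgsH.det hp (fun e he => hes e (List.mem_cons_of_mem _ he)) gs gs'
    exact ⟨rfl, rfl⟩
end

theorem evalBase_mem_Vx {x : List Bool} {op : BOp} {v w : Val} (hv : v ∈ Vx x)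
    (hb : evalBase op v = some w) : w ∈ Vx x := by
  match op, v, hb with
  | .not, .bool _, rfl | .null, .str _, rfl | .head, .str (_ :: _), rfl => exact Or.inl ⟨_, rfl⟩
  | .tail, .str (b :: s), rfl =>
    obtain ⟨_, h⟩ | ⟨s', h, hs'⟩ := hv
    · cases h
    · cases h
      exact Or.inr ⟨s, rfl, (List.suffix_cons b s).trans hs'⟩

mutual
theorem EvalH.mem_Vx {x : List Bool} {ρ : List Val} {e : Exp} {v : Val} {n : ℕ}
    {h : List (ℕ × List Val)} (hρ : ∀ u ∈ ρ, u ∈ Vx x) :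
    EvalH p ρ e v n h → v ∈ Vx x ∧ ∀ c ∈ h, ∀ u ∈ c.2, u ∈ Vx x
  | .tt | .ff => ⟨Or.inl ⟨_, rfl⟩, by simp⟩
  | .nil => ⟨Or.inr ⟨[], rfl, List.nil_suffix⟩, by simp⟩
  | .var hi => ⟨hρ _ (List.mem_of_getElem? hi), by simp⟩
  | .base g hb => by
    obtain ⟨hv, hh⟩ := EvalH.mem_Vx hρ g
    exact ⟨evalBase_mem_Vx hv hb, hh⟩
  | .iteT g0 g1 | .iteF g0 g1 => by
    obtain ⟨-, hh0⟩ := EvalH.mem_Vx hρ g0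
    obtain ⟨hv, hh1⟩ := EvalH.mem_Vx hρ g1
    exact ⟨hv, fun c hc => (List.mem_append.1 hc).elim (hh0 c) (hh1 c)⟩
  | .ambL g | .ambR g => EvalH.mem_Vx hρ g
  | .call _ gargs _ gbody => by
    obtain ⟨hws, hhs⟩ := EvalArgsH.mem_Vx hρ gargs
    obtain ⟨hv, hh⟩ := EvalH.mem_Vx hws gbody
    refine ⟨hv, fun c hc => ?_⟩
    rcases List.mem_append.1 hc with hc | hc
    · exact hhs c hc
    rcases List.mem_cons.1 hc with rfl | hc
    exacts [hws, hh c hc]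

theorem EvalArgsH.mem_Vx {x : List Bool} {ρ : List Val} {es : List Exp} {ws : List Val} {m : ℕ}
    {hs : List (ℕ × List Val)} (hρ : ∀ u ∈ ρ, u ∈ Vx x) :
    EvalArgsH p ρ es ws m hs → (∀ u ∈ ws, u ∈ Vx x) ∧ ∀ c ∈ hs, ∀ u ∈ c.2, u ∈ Vx x
  | .nil => by simp
  | .cons g gs => by
    obtain ⟨hv, hh⟩ := EvalH.mem_Vx hρ g
    obtain ⟨hvs, hhs⟩ := EvalArgsH.mem_Vx hρ gs
    exact ⟨List.forall_mem_cons.2 ⟨hv, hvs⟩,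
      fun c hc => (List.mem_append.1 hc).elim (hh c) (hhs c)⟩
end

theorem EvalH.history_eq_nil_or_tail_call {ρ : List Val} {e : Exp} {v : Val} {n : ℕ}
    {h : List (ℕ × List Val)} (ha : alpha e ≤ 1) : EvalH p ρ e v n h →
    (h = [] ∧ n ≤ sizeOf e) ∨ ∃ f ws d n' h', h = (f, ws) :: h' ∧ p[f]? = some d ∧
      ws.length = d.arity ∧ EvalH p ws d.body v n' h' ∧ n ≤ sizeOf e + n'
  | .tt | .ff | .nil | .var _ => Or.inl ⟨rfl, by simp⟩
  | .base g hb => by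
    obtain ⟨rfl, hn⟩ := g.history_eq_nil_and_le_sizeOf (alpha_base_le_one.1 ha)
    exact Or.inl ⟨rfl, by simp; omega⟩
  | .iteT g0 g1 | .iteF g0 g1 => by
    obtain ⟨hc, hb, hc'⟩ := alpha_ite_le_one.1 ha
    obtain ⟨rfl, hn0⟩ := g0.history_eq_nil_and_le_sizeOf hc
    rcases history_eq_nil_or_tail_call (by assumption) g1 with
      ⟨rfl, hn1⟩ | ⟨f, ws, d, n', h', rfl, hf, hw, hd, hn1⟩
    · exact Or.inl ⟨rfl, by simp; omega⟩
    · exact Or.inr ⟨f, ws, d, n', h', rfl, hf, hw, hd, by simp; omega⟩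
  | .ambL g | .ambR g => by
    obtain ⟨ha₁, ha₂⟩ := alpha_amb_le_one.1 ha
    rcases history_eq_nil_or_tail_call (by assumption) g with
      ⟨rfl, hn⟩ | ⟨f, ws, d, n', h', rfl, hf, hw, hd, hn⟩
    · exact Or.inl ⟨rfl, by simp; omega⟩
    · exact Or.inr ⟨f, ws, d, n', h', rfl, hf, hw, hd, by simp; omega⟩
  | .call hf gargs hw gbody => by
    obtain ⟨rfl, hm⟩ := gargs.history_eq_nil_and_le_sizeOf (alpha_call_le_one.1 ha)
    exact Or.inr ⟨_, _, _, _, _, rfl, hf, hw, gbody, by simp; omega⟩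

end Evaluation

theorem arity_lt_sizeOf_of_mem {p : Prog} {d : Defn} (hd : d ∈ p) : d.arity < sizeOf p := by
  have := List.sizeOf_lt_of_mem hd
  cases d
  simp only [Defn.mk.sizeOf_spec, sizeOf_nat] at this ⊢
  omega

theorem sizeOf_body_lt_sizeOf_of_mem {p : Prog} {d : Defn} (hd : d ∈ p) :
    sizeOf d.body < sizeOf p := by
  have := List.sizeOf_lt_of_mem hd
  cases d
  simp only [Defn.mk.sizeOf_spec] at this ⊢
  omega

def TailHistory (p : Prog) (v : Val) (h : List (ℕ × List Val)) : Prop :=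
  ∀ f ws h', (f, ws) :: h' <:+ h →
    ∃ d n, p[f]? = some d ∧ ws.length = d.arity ∧ EvalH p ws d.body v n h'

section TailRecursion

variable {p : Prog}

theorem EvalH.le_sizeOf_add_mul_length (hT : TRProg p) {h : List (ℕ × List Val)} :
    ∀ {ρ e v n}, alpha e ≤ 1 → EvalH p ρ e v n h → n ≤ sizeOf e + sizeOf p * h.length := by
  induction h with
  | nil =>
    intro ρ e v n ha he
    rcases he.history_eq_nil_or_tail_call ha with ⟨-, hn⟩ | ⟨_, _, _, _, _, hh, -⟩
    · simpa using hn
    · cases hh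
  | cons c h ih =>
    intro ρ e v n ha he
    rcases he.history_eq_nil_or_tail_call ha with
      ⟨hh, -⟩ | ⟨f, ws, d, n', h', hh, hf, -, hbody, hn⟩
    · cases hh
    obtain ⟨-, rfl⟩ := List.cons.inj hh
    have hd := List.mem_of_getElem? hf
    have hn' := ih (hT d hd) hbody
    have hsize := sizeOf_body_lt_sizeOf_of_mem hd
    simp only [List.length_cons, mul_add_one]
    omega

theorem EvalH.tailHistory (hT : TRProg p) {h : List (ℕ × List Val)} :
    ∀ {ρ e v n}, alpha e ≤ 1 → EvalH p ρ e v n h → TailHistory p v h := by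
  induction h with
  | nil => intro _ _ _ _ _ _ f ws h' hs; simp at hs
  | cons c h ih =>
    intro ρ e v n ha he
    rcases he.history_eq_nil_or_tail_call ha with
      ⟨hh, -⟩ | ⟨f, ws, d, n', h', hh, hf, hw, hbody, -⟩
    · cases hh
    obtain ⟨rfl, rfl⟩ := List.cons.inj hh
    intro g us h₁ hs
    rcases List.suffix_cons_iff.1 hs with hs | hs
    · simp only [List.cons.injEq, Prod.mk.injEq] at hs
      obtain ⟨⟨rfl, rfl⟩, rfl⟩ := hs
      exact ⟨d, n', hf, hw, hbody⟩
    · exact ih (hT d (List.mem_of_getElem? hf)) hbody g us h₁ hs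

theorem TailHistory.nodup (hp : CFProg p) {v : Val} :
    ∀ {h : List (ℕ × List Val)}, TailHistory p v h → h.Nodup
  | [], _ => List.nodup_nil
  | (f, ws) :: h, hh => by
    refine List.nodup_cons.2 ⟨fun hmem => ?_,
      nodup hp fun g us h' hs => hh g us h' (hs.trans (List.suffix_cons _ _))⟩
    obtain ⟨s, t, rfl⟩ := List.append_of_mem hmem
    obtain ⟨d, n, hd, -, hev⟩ := hh f ws _ List.suffix_rfl
    obtain ⟨d', n', hd', -, hev'⟩ :=
      hh f ws t ((List.suffix_append s _).trans (List.suffix_cons _ _))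
    obtain rfl := Option.some.inj (hd.symm.trans hd')
    have hlen := congrArg List.length (hev.det hp (hp d (List.mem_of_getElem? hd)) hev').2
    simp only [List.length_append, List.length_cons] at hlen
    omega

end TailRecursion

theorem card_le_pow_of_forall_length_le {α : Type*} (s : Finset α) (L : Finset (List α))
    (k : ℕ) (hL : ∀ l ∈ L, l.length ≤ k ∧ ∀ a ∈ l, a ∈ s) : L.card ≤ (s.card + 1) ^ k := by
  classical
  -- a list of length at most `k` is determined by its first `k` entries `l[i]?`
  calc L.card ≤ (Fintype.piFinset fun _ : Fin k => s.insertNone).card := by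
        refine Finset.card_le_card_of_injOn (fun l i => l[(i : ℕ)]?) (fun l hl => ?_) ?_
        · simp only [Finset.mem_coe, Fintype.mem_piFinset, Finset.mem_insertNone]
          exact fun i a ha => (hL l hl).2 a (List.mem_of_getElem? ha)
        · intro l₁ hl₁ l₂ hl₂ heq
          refine List.ext_getElem? fun i => ?_
          by_cases hi : i < k
          · exact congrFun heq ⟨i, hi⟩
          · rw [List.getElem?_eq_none (by have := (hL l₁ hl₁).1; omega),
              List.getElem?_eq_none (by have := (hL l₂ hl₂).1; omega)]
    _ = (s.card + 1) ^ k := by simp [Finset.card_insertNone]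

def vxFinset (x : List Bool) : Finset Val :=
  insert (.bool true) (insert (.bool false) (x.tails.map Val.str).toFinset)

theorem mem_vxFinset {x : List Bool} {v : Val} (hv : v ∈ Vx x) : v ∈ vxFinset x := by
  rcases hv with ⟨b, rfl⟩ | ⟨s, rfl, hs⟩
  · cases b <;> simp [vxFinset]
  · simpa [vxFinset] using hs

theorem card_vxFinset_le (x : List Bool) : (vxFinset x).card ≤ x.length + 3 := by
  calc (vxFinset x).card ≤ (x.tails.map Val.str).toFinset.card + 2 :=
        (Finset.card_insert_le _ _).trans (Nat.succ_le_succ (Finset.card_insert_le _ _))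
    _ ≤ x.length + 3 := by
        have := List.toFinset_card_le (x.tails.map Val.str)
        simp only [List.length_map, List.length_tails] at this
        omega

theorem TailHistory.length_le {p : Prog} {v : Val} {h : List (ℕ × List Val)} {x : List Bool}
    (hp : CFProg p) (hh : TailHistory p v h) (hvx : ∀ c ∈ h, ∀ u ∈ c.2, u ∈ Vx x) :
    h.length ≤ p.length * (x.length + 4) ^ sizeOf p := by
  have hcall : ∀ c ∈ h, ∃ d, p[c.1]? = some d ∧ c.2.length = d.arity := by
    intro c hc
    obtain ⟨s, t, rfl⟩ := List.append_of_mem hc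
    obtain ⟨d, -, hd, hw, -⟩ := hh c.1 c.2 t (List.suffix_append s _)
    exact ⟨d, hd, hw⟩
  have hargs :
      ∀ l ∈ h.toFinset.image Prod.snd, l.length ≤ sizeOf p ∧ ∀ u ∈ l, u ∈ vxFinset x := by
    simp only [Finset.mem_image, List.mem_toFinset]
    rintro _ ⟨c, hc, rfl⟩
    obtain ⟨d, hd, hw⟩ := hcall c hc
    exact ⟨hw ▸ (arity_lt_sizeOf_of_mem (List.mem_of_getElem? hd)).le,
      fun u hu => mem_vxFinset (hvx c hc u hu)⟩
  calc h.length = h.toFinset.card := (List.toFinset_card_of_nodup (hh.nodup hp)).symm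
    _ ≤ (Finset.range p.length ×ˢ h.toFinset.image Prod.snd).card := by
        refine Finset.card_le_card fun c hc => Finset.mem_product.2 ⟨?_, ?_⟩
        · obtain ⟨d, hd, -⟩ := hcall c (List.mem_toFinset.1 hc)
          exact Finset.mem_range.2 (List.getElem?_eq_some_iff.1 hd).1
        · exact Finset.mem_image_of_mem _ hc
    _ ≤ p.length * ((vxFinset x).card + 1) ^ sizeOf p := by
        rw [Finset.card_product, Finset.card_range]
        exact Nat.mul_le_mul_left _ (card_le_pow_of_forall_length_le _ _ _ hargs)
    _ ≤ p.length * (x.length + 4) ^ sizeOf p :=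
        Nat.mul_le_mul_left _ (Nat.pow_le_pow_left (by have := card_vxFinset_le x; omega) _)

/-- every terminating CFTR program runs in native time polynomial in the
length of its input. -/
theorem cftr_runs_in_polytime (p : Prog) (hp : CFTRProg p)
    (hterm : ∀ x : List Bool, ∃ v, Run p x v) :
    ∃ π : Polynomial ℕ, ∀ x n, TimeIs p x n → n ≤ π.eval x.length := by
  obtain ⟨hcf, htr⟩ := hp
  refine ⟨.C (sizeOf p.entry) + .C (sizeOf p * p.length) * (.X + .C 4) ^ sizeOf p, ?_⟩
  rintro x n ⟨v, h, hrun⟩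
  have hentry := htr.alpha_entry_le_one
  have hvx : ∀ u ∈ [Val.str x], u ∈ Vx x :=
    List.forall_mem_singleton.2 (Or.inr ⟨x, rfl, List.suffix_rfl⟩)
  have hlen := (EvalH.tailHistory htr hentry hrun).length_le hcf (EvalH.mem_Vx hvx hrun).2
  simp only [Polynomial.eval_add, Polynomial.eval_C, Polynomial.eval_mul, Polynomial.eval_pow,
    Polynomial.eval_X]
  calc n ≤ sizeOf p.entry + sizeOf p * h.length := EvalH.le_sizeOf_add_mul_length htr hentry hrun
    _ ≤ sizeOf p.entry + sizeOf p * (p.length * (x.length + 4) ^ sizeOf p) := by gcongr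
    _ = sizeOf p.entry + sizeOf p * p.length * (x.length + 4) ^ sizeOf p := by ring
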